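/- For each one-sided sequence (s_0, s_1, s_2, …) of residue classes in F, there exists a (1/q)-Lipschitz function f^{(s_0s_1s_2…)} : R → R whose vertical curve V(f^{(s_0s_1…)}) = {(f(t),t) : t ∈ R} equals exactly the set of points (x,y) ∈ R² such that T^k(x,y) ∈ D_{1/q}(s_k) × R for all k ≥ 0. Moreover R² is the union of these vertical curves over all sequences. -/

import Mathlib

open scoped Classical
open MeasureTheory Filter

noncomputable section

/-- A complete, locally compact non-Archimedean field with residue field of
order `q`, absolute value normalized so that a uniformizer has norm `1/q`.
`reps` is a set of `q` coset representatives for the residue field: they cover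
the ring of integers by discs of radius `1/q` and are pairwise at distance
`> 1/q`. -/
structure NAField (K : Type*) [NormedField K] where
  na : IsNonarchimedean (fun x : K => ‖x‖)
  complete : CompleteSpace K
  locCompact : LocallyCompactSpace K
  q : ℕ
  one_lt_q : 1 < q
  valGroup : ∀ x : K, x ≠ 0 → ∃ n : ℤ, ‖x‖ = (q : ℝ) ^ n
  exists_unif : ∃ ϖ : K, ‖ϖ‖ = (q : ℝ)⁻¹
  reps : Finset K
  card_reps : reps.card = q
  norm_reps : ∀ s ∈ reps, ‖s‖ ≤ 1
  reps_cover : ∀ x : K, ‖x‖ ≤ 1 → ∃ s ∈ reps, ‖x - s‖ ≤ (q : ℝ)⁻¹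
  reps_sep : ∀ s ∈ reps, ∀ t ∈ reps, s ≠ t → (q : ℝ)⁻¹ < ‖s - t‖

variable {K : Type*} [NormedField K]

/-- `f : R → R` is `(1/q)`-Lipschitz on the ring of integers. -/
def NAField.IsLip (F : NAField K) (f : K → K) : Prop :=
  (∀ t : K, ‖t‖ ≤ 1 → ‖f t‖ ≤ 1) ∧
  ∀ t₁ t₂ : K, ‖t₁‖ ≤ 1 → ‖t₂‖ ≤ 1 → ‖f t₁ - f t₂‖ ≤ ((F.q : ℝ))⁻¹ * ‖t₁ - t₂‖

/-- The unit polydisc `R² ⊆ K²`. -/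
def unitPoly (K : Type*) [NormedField K] : Set (K × K) := {p | ‖p.1‖ ≤ 1 ∧ ‖p.2‖ ≤ 1}

/-- Horizontal `δ`-neighborhood `H_δ(f) = {(t, f t + θ) : t ∈ R, |θ| ≤ δ}`. -/
def Hnbhd (f : K → K) (δ : ℝ) : Set (K × K) :=
  {p | ∃ t θ : K, ‖t‖ ≤ 1 ∧ ‖θ‖ ≤ δ ∧ p = (t, f t + θ)}

/-- Vertical `δ`-neighborhood `V_δ(f) = {(f t + θ, t) : t ∈ R, |θ| ≤ δ}`. -/
def Vnbhd (f : K → K) (δ : ℝ) : Set (K × K) :=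
  {p | ∃ t θ : K, ‖t‖ ≤ 1 ∧ ‖θ‖ ≤ δ ∧ p = (f t + θ, t)}

/-- The automorphism `T(x,y) = (a y + b (x^q - x), x)`. -/
def NAField.Tmap (F : NAField K) (a b : K) : K × K → K × K :=
  fun p => (a * p.2 + b * (p.1 ^ F.q - p.1), p.1)

/-- The inverse automorphism `T⁻¹(x,y) = (y, a⁻¹ (x - b (y^q - y)))`. -/
def NAField.Tinv (F : NAField K) (a b : K) : K × K → K × K :=
  fun p => (p.2, a⁻¹ * (p.1 - b * (p.2 ^ F.q - p.2)))

/-- The attractor `A_T = ⋂_{n ≥ 1} Tⁿ(R²)`. -/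
def NAField.Attractor (F : NAField K) (a b : K) : Set (K × K) :=
  ⋂ n ∈ {n : ℕ | 1 ≤ n}, (F.Tmap a b)^[n] '' unitPoly K

/-- The basin of attraction `B_T = ⋃_{n ≥ 1} T⁻ⁿ(R²)`. -/
def NAField.Basin (F : NAField K) (a b : K) : Set (K × K) :=
  ⋃ n ∈ {n : ℕ | 1 ≤ n}, (F.Tmap a b)^[n] ⁻¹' unitPoly K

/-- `T^k` for `k : ℤ`. -/
def NAField.iterZ (F : NAField K) (a b : K) (k : ℤ) : K × K → K × K :=
  if 0 ≤ k then (F.Tmap a b)^[k.toNat] else (F.Tinv a b)^[(-k).toNat]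

/-- The image under the conjugacy `ω` of the cylinder set of bisequences
agreeing with `s` on coordinates `-M, …, M`: points of the attractor whose
itinerary through the residue strips matches `s` on those coordinates. -/
def NAField.Cyl (F : NAField K) (a b : K) (s : ℤ → K) (M : ℕ) : Set (K × K) :=
  {p | p ∈ F.Attractor a b ∧
    ∀ k : ℤ, |k| ≤ (M : ℤ) → ‖(F.iterZ a b k p).1 - s k‖ ≤ ((F.q : ℝ))⁻¹}

/-!
The residue field `R/𝔪` is finite of order `q`, so `x ↦ x^q` is the identity on it and, since
`q = 0` in it, contracts each residue disc by `1/q`. As `‖b‖ = q`, the map `T` therefore expands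
the horizontal gap of two points in the same strip by `q`:
`q ‖x - x'‖ ≤ max ‖y - y'‖ ‖(T p).1 - (T p').1‖`. Iterating this along two orbits with the same
itinerary for `N` steps gives `q ‖x - x'‖ ≤ max ‖y - y'‖ q⁻ᴺ`, hence at most one point of each
horizontal line follows a given itinerary forever, and these points form a `1/q`-Lipschitz curve.

Existence is a graph transform: if `g` is `1/q`-Lipschitz, then `a t + b (x^q - x) = g x` has a
solution `x` in any residue disc (a fixed point of the contraction `x ↦ x^q - b⁻¹ (g x - a t)`),
which is again a `1/q`-Lipschitz function of `t`. So every finite itinerary is followed along such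
a curve, and by the estimate above these approximations converge. Finally `T(R²) ⊆ R²`, so every
point of `R²` follows the itinerary of its own orbit.
-/

namespace Ultrametric

section Norm

variable {E : Type*} [SeminormedAddCommGroup E] [IsUltrametricDist E] {x y : E} {c : ℝ}

theorem norm_add_le_of_le (hx : ‖x‖ ≤ c) (hy : ‖y‖ ≤ c) : ‖x + y‖ ≤ c :=
  (IsUltrametricDist.norm_add_le_max x y).trans (max_le hx hy)

theorem norm_sub_le_of_le (hx : ‖x‖ ≤ c) (hy : ‖y‖ ≤ c) : ‖x - y‖ ≤ c := by
  rw [sub_eq_add_neg]; exact norm_add_le_of_le hx (by rwa [norm_neg])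

end Norm

variable (K) [IsUltrametricDist K]

def integers : Subring K where
  carrier := {x | ‖x‖ ≤ 1}
  mul_mem' {x y} hx hy := by
    simpa only [Set.mem_ofPred_eq, norm_mul] using mul_le_one₀ hx (norm_nonneg y) hy
  one_mem' := norm_one.le
  add_mem' := norm_add_le_of_le
  zero_mem' := by simp
  neg_mem' {x} hx := by simpa using hx

def maximalIdeal : Ideal (integers K) where
  carrier := {x | ‖(x : K)‖ < 1}
  add_mem' {x y} hx hy := (IsUltrametricDist.norm_add_le_max (x : K) y).trans_lt (max_lt hx hy)
  zero_mem' := by simp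
  smul_mem' c x hx := by
    simpa only [Set.mem_ofPred_eq, smul_eq_mul, Subring.coe_mul, norm_mul]
      using mul_lt_one_of_nonneg_of_lt_one_right c.2 (norm_nonneg _) hx

variable {K}

theorem mem_integers {x : K} : x ∈ integers K ↔ ‖x‖ ≤ 1 := Iff.rfl

theorem mem_maximalIdeal {x : integers K} : x ∈ maximalIdeal K ↔ ‖(x : K)‖ < 1 := Iff.rfl

instance : (maximalIdeal K).IsMaximal := by
  refine Ideal.isMaximal_iff.2 ⟨by simp [mem_maximalIdeal], fun J x _ hx hxJ => ?_⟩
  have hx1 : ‖(x : K)‖ = 1 := le_antisymm x.2 (not_lt.1 hx)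
  have hinv : (x : K)⁻¹ ∈ integers K := by
    show ‖(x : K)⁻¹‖ ≤ 1
    rw [norm_inv, hx1, inv_one]
  have hx0 : (x : K) ≠ 0 := norm_ne_zero_iff.1 (by rw [hx1]; exact one_ne_zero)
  convert J.mul_mem_left ⟨_, hinv⟩ hxJ
  exact Subtype.ext (inv_mul_cancel₀ hx0).symm

variable (K) in
abbrev ResidueField := integers K ⧸ maximalIdeal K

instance : Field (ResidueField K) := Ideal.Quotient.field _

theorem residue_eq_zero_iff {x : integers K} :
    Ideal.Quotient.mk (maximalIdeal K) x = 0 ↔ ‖(x : K)‖ < 1 :=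
  Ideal.Quotient.eq_zero_iff_mem

theorem residue_eq_residue_iff {x y : integers K} :
    Ideal.Quotient.mk (maximalIdeal K) x = Ideal.Quotient.mk (maximalIdeal K) y ↔
      ‖(x : K) - y‖ < 1 :=
  Ideal.Quotient.eq

variable [Finite (ResidueField K)]

theorem norm_pow_card_sub_self_lt_one {x : K} (hx : ‖x‖ ≤ 1) :
    ‖x ^ Nat.card (ResidueField K) - x‖ < 1 := by
  have := Fintype.ofFinite (ResidueField K)
  have h := FiniteField.pow_card (Ideal.Quotient.mk (maximalIdeal K) ⟨x, mem_integers.2 hx⟩)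
  rw [← Nat.card_eq_fintype_card, ← map_pow, residue_eq_residue_iff] at h
  simpa using h

theorem norm_geom_sum₂_card_lt_one {x y : K} (hx : ‖x‖ ≤ 1) (hy : ‖y‖ ≤ 1) (hxy : ‖x - y‖ < 1) :
    ‖∑ i ∈ Finset.range (Nat.card (ResidueField K)),
        x ^ i * y ^ (Nat.card (ResidueField K) - 1 - i)‖ < 1 := by
  have := Fintype.ofFinite (ResidueField K)
  let x' : integers K := ⟨x, mem_integers.2 hx⟩
  let y' : integers K := ⟨y, mem_integers.2 hy⟩
  have hres : Ideal.Quotient.mk (maximalIdeal K) x' = Ideal.Quotient.mk (maximalIdeal K) y' :=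
    residue_eq_residue_iff.2 hxy
  have h : Ideal.Quotient.mk (maximalIdeal K)
      (∑ i ∈ Finset.range (Nat.card (ResidueField K)),
        x' ^ i * y' ^ (Nat.card (ResidueField K) - 1 - i)) = 0 := by
    rw [RingHom.map_geom_sum₂, hres, geom_sum₂_self, Nat.card_eq_fintype_card,
      FiniteField.cast_card_eq_zero, zero_mul]
  simpa [x', y'] using residue_eq_zero_iff.1 h

end Ultrametric

namespace NAField

theorem isUltrametricDist (F : NAField K) : IsUltrametricDist K :=
  IsUltrametricDist.isUltrametricDist_of_isNonarchimedean_norm F.na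

variable (F : NAField K)

theorem one_lt_q_real : (1 : ℝ) < F.q := by exact_mod_cast F.one_lt_q

theorem q_pos : (0 : ℝ) < F.q := zero_lt_one.trans F.one_lt_q_real

theorem inv_q_pos : (0 : ℝ) < (F.q : ℝ)⁻¹ := inv_pos.2 F.q_pos

theorem inv_q_lt_one : (F.q : ℝ)⁻¹ < 1 := inv_lt_one_of_one_lt₀ F.one_lt_q_real

variable {F}

theorem norm_le_inv_q_of_norm_lt_one {x : K} (h : ‖x‖ < 1) : ‖x‖ ≤ (F.q : ℝ)⁻¹ := by
  rcases eq_or_ne x 0 with rfl | hx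
  · simp [F.inv_q_pos.le]
  obtain ⟨n, hn⟩ := F.valGroup x hx
  rw [hn] at h ⊢
  have hn : n ≤ -1 := by
    by_contra! hn
    exact h.not_ge (one_le_zpow₀ F.one_lt_q_real.le (by omega))
  simpa using zpow_le_zpow_right₀ F.one_lt_q_real.le hn

theorem card_residueField [IsUltrametricDist K] :
    Nat.card (Ultrametric.ResidueField K) = F.q := by
  let φ : F.reps → Ultrametric.ResidueField K := fun s =>
    Ideal.Quotient.mk _ ⟨s, Ultrametric.mem_integers.2 (F.norm_reps s s.2)⟩
  have hφ : Function.Bijective φ := by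
    refine ⟨fun s t hst => Subtype.ext ?_, fun x => ?_⟩
    · by_contra hne
      have := norm_le_inv_q_of_norm_lt_one (F := F) (Ultrametric.residue_eq_residue_iff.1 hst)
      exact this.not_gt (F.reps_sep s s.2 t t.2 hne)
    · obtain ⟨x, rfl⟩ := Ideal.Quotient.mk_surjective x
      obtain ⟨s, hs, hxs⟩ := F.reps_cover x x.2
      exact ⟨⟨s, hs⟩, Ultrametric.residue_eq_residue_iff.2 <| by
        rw [norm_sub_rev]; exact hxs.trans_lt F.inv_q_lt_one⟩
  rw [← Nat.card_congr (Equiv.ofBijective φ hφ), Nat.card_eq_fintype_card, Fintype.card_coe,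
    F.card_reps]

theorem finite_residueField (F : NAField K) [IsUltrametricDist K] :
    Finite (Ultrametric.ResidueField K) :=
  Nat.finite_of_card_ne_zero (F.card_residueField.trans_ne (by have := F.one_lt_q; omega))

theorem norm_pow_q_sub_self_le {x : K} (hx : ‖x‖ ≤ 1) : ‖x ^ F.q - x‖ ≤ (F.q : ℝ)⁻¹ := by
  have := F.isUltrametricDist
  have := F.finite_residueField
  apply norm_le_inv_q_of_norm_lt_one
  simpa [F.card_residueField] using Ultrametric.norm_pow_card_sub_self_lt_one hx

theorem norm_pow_q_sub_pow_q_le {x y : K} (hx : ‖x‖ ≤ 1) (hy : ‖y‖ ≤ 1)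
    (hxy : ‖x - y‖ ≤ (F.q : ℝ)⁻¹) : ‖x ^ F.q - y ^ F.q‖ ≤ (F.q : ℝ)⁻¹ * ‖x - y‖ := by
  have := F.isUltrametricDist
  have := F.finite_residueField
  rw [← geom_sum₂_mul, norm_mul]
  gcongr
  apply norm_le_inv_q_of_norm_lt_one
  simpa [F.card_residueField] using
    Ultrametric.norm_geom_sum₂_card_lt_one hx hy (hxy.trans_lt F.inv_q_lt_one)

theorem norm_le_one_of_near_rep {x s : K} (hs : s ∈ F.reps) (h : ‖x - s‖ ≤ (F.q : ℝ)⁻¹) :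
    ‖x‖ ≤ 1 := by
  have := F.isUltrametricDist
  simpa using Ultrametric.norm_add_le_of_le (h.trans F.inv_q_lt_one.le) (F.norm_reps s hs)

theorem norm_sub_le_of_near {x y s : K} (hx : ‖x - s‖ ≤ (F.q : ℝ)⁻¹)
    (hy : ‖y - s‖ ≤ (F.q : ℝ)⁻¹) : ‖x - y‖ ≤ (F.q : ℝ)⁻¹ := by
  have := F.isUltrametricDist
  simpa using Ultrametric.norm_sub_le_of_le hx hy

end NAField

theorem mul_le_of_mul_le_max_left {q d M : ℝ} (hq : 1 < q) (hM : 0 ≤ M)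
    (h : q * d ≤ max d M) : q * d ≤ M := by
  rcases le_max_iff.1 h with h | h
  · nlinarith
  · exact h

theorem exists_fixedPoint_of_lipschitzOnWith {E : Type*} [MetricSpace E] [CompleteSpace E]
    {f : E → E} {s : Set E} {c : NNReal} (hc : c < 1) (hs : IsClosed s) {x₀ : E} (hx₀ : x₀ ∈ s)
    (hmaps : Set.MapsTo f s s) (hf : LipschitzOnWith c f s) : ∃ x ∈ s, f x = x := by
  obtain ⟨x, hx, hfix, -⟩ := ContractingWith.exists_fixedPoint' hs.isComplete hmaps
    ⟨hc, hf.mapsToRestrict hmaps⟩ hx₀ (edist_ne_top _ _)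
  exact ⟨x, hx, hfix⟩

theorem pow_mul_le_of_mul_le_max {q : ℝ} (hq : 1 < q) {d : ℕ → ℝ} (hd : ∀ k, 0 ≤ d k) {N : ℕ}
    (hrec : ∀ k < N, q * d (k + 1) ≤ max (d k) (d (k + 2))) (h01 : d 0 < q * d 1) :
    q ^ N * d 1 ≤ d (N + 1) := by
  suffices ∀ n ≤ N, q ^ n * d 1 ≤ d (n + 1) ∧ d n < q * d (n + 1) from (this N le_rfl).1
  intro n hn
  induction n with
  | zero => simpa using h01
  | succ n ih =>
    obtain ⟨hpow, hlt⟩ := ih (by omega)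
    have hstep : q * d (n + 1) ≤ d (n + 2) := by
      rcases le_max_iff.1 (hrec n (by omega)) with h | h
      · exact absurd h (not_le.2 hlt)
      · exact h
    have hpos : 0 < d (n + 1) := by nlinarith [hd n]
    constructor
    · rw [pow_succ]; nlinarith
    · calc d (n + 1) < q * d (n + 1) := lt_mul_left hpos hq
        _ ≤ d (n + 2) := hstep
        _ ≤ q * d (n + 2) := le_mul_of_one_le_left (hd _) hq.le

namespace NAField

variable {F : NAField K} {a b : K}

theorem continuous_Tmap (F : NAField K) (a b : K) : Continuous (F.Tmap a b) := by
  unfold NAField.Tmap; fun_prop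

theorem mapsTo_Tmap (ha : ‖a‖ ≤ 1) (hb : ‖b‖ = F.q) :
    Set.MapsTo (F.Tmap a b) (unitPoly K) (unitPoly K) := by
  have := F.isUltrametricDist
  rintro ⟨x, y⟩ ⟨hx, hy⟩
  refine ⟨Ultrametric.norm_add_le_of_le ?_ ?_, hx⟩
  · simpa [norm_mul] using mul_le_one₀ ha (norm_nonneg y) hy
  · rw [norm_mul, hb, ← mul_inv_cancel₀ F.q_pos.ne']
    exact mul_le_mul_of_nonneg_left (norm_pow_q_sub_self_le hx) (by positivity)

theorem mul_norm_sub_fst_le_max (ha : ‖a‖ ≤ 1) (hb : ‖b‖ = F.q) {p p' : K × K}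
    (hp : ‖p.1‖ ≤ 1) (hp' : ‖p'.1‖ ≤ 1) (hpp' : ‖p.1 - p'.1‖ ≤ (F.q : ℝ)⁻¹) :
    (F.q : ℝ) * ‖p.1 - p'.1‖ ≤ max ‖p.2 - p'.2‖ ‖(F.Tmap a b p).1 - (F.Tmap a b p').1‖ := by
  have := F.isUltrametricDist
  have hq := F.one_lt_q_real
  have hdecomp : b * (p.1 - p'.1) = b * (p.1 ^ F.q - p'.1 ^ F.q) + a * (p.2 - p'.2)
      - ((F.Tmap a b p).1 - (F.Tmap a b p').1) := by
    simp only [NAField.Tmap]; ring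
  have hfrob : ‖b * (p.1 ^ F.q - p'.1 ^ F.q)‖ ≤ ‖p.1 - p'.1‖ := by
    rw [norm_mul, hb]
    calc (F.q : ℝ) * ‖p.1 ^ F.q - p'.1 ^ F.q‖ ≤ F.q * ((F.q : ℝ)⁻¹ * ‖p.1 - p'.1‖) := by
          gcongr; exact norm_pow_q_sub_pow_q_le hp hp' hpp'
      _ = ‖p.1 - p'.1‖ := by field_simp
  have ha' : ‖a * (p.2 - p'.2)‖ ≤ ‖p.2 - p'.2‖ := by
    simpa [norm_mul] using mul_le_of_le_one_left (norm_nonneg _) ha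
  refine mul_le_of_mul_le_max_left hq (by positivity) ?_
  rw [← hb, ← norm_mul, hdecomp]
  calc _ ≤ max (max ‖b * (p.1 ^ F.q - p'.1 ^ F.q)‖ ‖a * (p.2 - p'.2)‖)
          ‖(F.Tmap a b p).1 - (F.Tmap a b p').1‖ := by
        rw [sub_eq_add_neg, ← norm_neg ((F.Tmap a b p).1 - _)]
        exact (IsUltrametricDist.norm_add_le_max _ _).trans
          (max_le_max_right _ (IsUltrametricDist.norm_add_le_max _ _))
    _ ≤ _ := by rw [max_assoc]; gcongr

variable (F a b) in
def FollowsUpTo (s : ℕ → K) (N : ℕ) (p : K × K) : Prop :=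
  ∀ k ≤ N, ‖((F.Tmap a b)^[k] p).1 - s k‖ ≤ (F.q : ℝ)⁻¹

variable (F a b) in
def Follows (s : ℕ → K) (p : K × K) : Prop :=
  ∀ k, ‖((F.Tmap a b)^[k] p).1 - s k‖ ≤ (F.q : ℝ)⁻¹

variable {s : ℕ → K}

theorem FollowsUpTo.mono {N M : ℕ} {p : K × K} (h : F.FollowsUpTo a b s N p) (hMN : M ≤ N) :
    F.FollowsUpTo a b s M p :=
  fun k hk => h k (hk.trans hMN)

theorem Follows.followsUpTo {p : K × K} (h : F.Follows a b s p) (N : ℕ) :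
    F.FollowsUpTo a b s N p :=
  fun k _ => h k

theorem mul_norm_sub_fst_le_of_followsUpTo (ha : ‖a‖ ≤ 1) (hb : ‖b‖ = F.q)
    (hs : ∀ k, s k ∈ F.reps) {N : ℕ} {p p' : K × K} (hp : F.FollowsUpTo a b s N p)
    (hp' : F.FollowsUpTo a b s N p') :
    (F.q : ℝ) * ‖p.1 - p'.1‖ ≤ max ‖p.2 - p'.2‖ ((F.q : ℝ)⁻¹ ^ N) := by
  have hq := F.one_lt_q_real
  set T := F.Tmap a b
  set d : ℕ → ℝ := fun k => ‖(T^[k] p).2 - (T^[k] p').2‖ with hd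
  have hsnd : ∀ (k : ℕ) (p : K × K), (T^[k + 1] p).2 = (T^[k] p).1 := fun k p => by
    rw [Function.iterate_succ_apply']; rfl
  have hd_succ : ∀ k, d (k + 1) = ‖(T^[k] p).1 - (T^[k] p').1‖ := fun k => by
    simp only [hd, hsnd]
  have hrec : ∀ k < N, F.q * d (k + 1) ≤ max (d k) (d (k + 2)) := fun k hk => by
    rw [hd_succ, hd_succ, Function.iterate_succ_apply', Function.iterate_succ_apply']
    exact mul_norm_sub_fst_le_max ha hb (norm_le_one_of_near_rep (hs k) (hp k hk.le))
      (norm_le_one_of_near_rep (hs k) (hp' k hk.le))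
      (norm_sub_le_of_near (hp k hk.le) (hp' k hk.le))
  have hd1 : d 1 = ‖p.1 - p'.1‖ := by simp [hd_succ]
  have hd0 : d 0 = ‖p.2 - p'.2‖ := rfl
  rw [← hd1, ← hd0]
  rcases le_or_gt (F.q * d 1) (d 0) with h01 | h01
  · exact le_max_of_le_left h01
  refine le_max_of_le_right (le_of_mul_le_mul_left ?_ (by positivity : (0 : ℝ) < F.q ^ N))
  have hgrowth := pow_mul_le_of_mul_le_max (d := d) hq (fun k => norm_nonneg _) hrec h01
  have hlast : d (N + 1) ≤ (F.q : ℝ)⁻¹ := by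
    rw [hd_succ]; exact norm_sub_le_of_near (hp N le_rfl) (hp' N le_rfl)
  rw [inv_pow, mul_inv_cancel₀ (by positivity)]
  calc (F.q : ℝ) ^ N * (F.q * d 1) = F.q * (F.q ^ N * d 1) := by ring
    _ ≤ F.q * (F.q : ℝ)⁻¹ := by gcongr; exact hgrowth.trans hlast
    _ = 1 := mul_inv_cancel₀ (by positivity)

theorem mul_norm_sub_fst_le_of_follows (ha : ‖a‖ ≤ 1) (hb : ‖b‖ = F.q)
    (hs : ∀ k, s k ∈ F.reps) {p p' : K × K} (hp : F.Follows a b s p)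
    (hp' : F.Follows a b s p') : (F.q : ℝ) * ‖p.1 - p'.1‖ ≤ ‖p.2 - p'.2‖ := by
  by_contra! h
  obtain ⟨N, hN⟩ := exists_pow_lt_of_lt_one ((norm_nonneg _).trans_lt h) F.inv_q_lt_one
  exact (mul_norm_sub_fst_le_of_followsUpTo ha hb hs (hp.followsUpTo N)
    (hp'.followsUpTo N)).not_gt (max_lt h hN)

theorem exists_Tmap_fst_eq (ha : ‖a‖ ≤ 1) (hb : ‖b‖ = F.q) {g : K → K} (hg : F.IsLip g)
    {s₀ : K} (hs₀ : s₀ ∈ F.reps) {t : K} (ht : ‖t‖ ≤ 1) :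
    ∃ x, ‖x - s₀‖ ≤ (F.q : ℝ)⁻¹ ∧ (F.Tmap a b (x, t)).1 = g x := by
  have := F.isUltrametricDist
  have := F.complete
  have hb0 : b ≠ 0 := norm_ne_zero_iff.1 (hb ▸ F.q_pos.ne')
  have hbinv (y : K) : ‖b⁻¹ * y‖ = (F.q : ℝ)⁻¹ * ‖y‖ := by rw [norm_mul, norm_inv, hb]
  let D := Metric.closedBall s₀ (F.q : ℝ)⁻¹
  have hD : ∀ x ∈ D, ‖x‖ ≤ 1 := fun x hx =>
    norm_le_one_of_near_rep hs₀ (mem_closedBall_iff_norm.1 hx)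
  -- a fixed point of `Θ` solves `a t + b (x^q - x) = g x`
  let Θ : K → K := fun x => x ^ F.q - b⁻¹ * (g x - a * t)
  have hmaps : Set.MapsTo Θ D D := fun x hx => by
    have hx1 := hD x hx
    rw [mem_closedBall_iff_norm] at hx ⊢
    have e : Θ x - s₀ = (x ^ F.q - x) + (x - s₀) - b⁻¹ * (g x - a * t) := by ring
    rw [e]
    refine Ultrametric.norm_sub_le_of_le
      (Ultrametric.norm_add_le_of_le (norm_pow_q_sub_self_le hx1) hx) ?_
    rw [hbinv]
    refine mul_le_of_le_one_right F.inv_q_pos.le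
      (Ultrametric.norm_sub_le_of_le (hg.1 x hx1) ?_)
    simpa [norm_mul] using mul_le_one₀ ha (norm_nonneg _) ht
  have hlip : LipschitzOnWith (F.q : NNReal)⁻¹ Θ D := LipschitzOnWith.of_dist_le_mul fun x hx y hy => by
    have hxy : ‖x - y‖ ≤ (F.q : ℝ)⁻¹ :=
      norm_sub_le_of_near (mem_closedBall_iff_norm.1 hx) (mem_closedBall_iff_norm.1 hy)
    have e : Θ x - Θ y = (x ^ F.q - y ^ F.q) - b⁻¹ * (g x - g y) := by ring
    rw [dist_eq_norm, dist_eq_norm, e, NNReal.coe_inv, NNReal.coe_natCast]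
    refine Ultrametric.norm_sub_le_of_le (norm_pow_q_sub_pow_q_le (hD x hx) (hD y hy) hxy) ?_
    rw [hbinv]
    gcongr
    exact (hg.2 _ _ (hD x hx) (hD y hy)).trans
      (mul_le_of_le_one_left (norm_nonneg _) F.inv_q_lt_one.le)
  obtain ⟨x, hxD, hfix⟩ := exists_fixedPoint_of_lipschitzOnWith
    (inv_lt_one_of_one_lt₀ (show (1 : NNReal) < F.q by exact_mod_cast F.one_lt_q)) Metric.isClosed_closedBall
    (Metric.mem_closedBall_self F.inv_q_pos.le) hmaps hlip
  refine ⟨x, mem_closedBall_iff_norm.1 hxD, ?_⟩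
  replace hfix : x ^ F.q - b⁻¹ * (g x - a * t) = x := hfix
  show a * t + b * (x ^ F.q - x) = g x
  field_simp at hfix
  linear_combination hfix

theorem exists_isLip_followsUpTo (ha : ‖a‖ ≤ 1) (hb : ‖b‖ = F.q) (N : ℕ) :
    ∀ s : ℕ → K, (∀ k, s k ∈ F.reps) →
      ∃ g, F.IsLip g ∧ ∀ t, ‖t‖ ≤ 1 → F.FollowsUpTo a b s N (g t, t) := by
  induction N with
  | zero =>
    intro s hs
    refine ⟨fun _ => s 0, ⟨fun _ _ => F.norm_reps _ (hs 0), fun _ _ _ _ => ?_⟩, ?_⟩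
    · simp only [sub_self, norm_zero]; positivity
    · intro t _ k hk
      obtain rfl : k = 0 := by omega
      simp [F.inv_q_pos.le]
  | succ N ih =>
    intro s hs
    obtain ⟨g, hg, hgN⟩ := ih (fun k => s (k + 1)) (fun k => hs (k + 1))
    choose! f hf using fun t (ht : ‖t‖ ≤ 1) => exists_Tmap_fst_eq ha hb hg (hs 0) ht
    have hf1 : ∀ t, ‖t‖ ≤ 1 → ‖f t‖ ≤ 1 := fun t ht => norm_le_one_of_near_rep (hs 0) (hf t ht).1
    have hT : ∀ t, ‖t‖ ≤ 1 → F.Tmap a b (f t, t) = (g (f t), f t) :=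
      fun t ht => Prod.ext (hf t ht).2 rfl
    refine ⟨f, ⟨hf1, fun t t' ht ht' => ?_⟩, fun t ht k hk => ?_⟩
    · have hstep := mul_norm_sub_fst_le_max (p := (f t, t)) (p' := (f t', t')) ha hb (hf1 t ht)
        (hf1 t' ht') (norm_sub_le_of_near (hf t ht).1 (hf t' ht').1)
      rw [hT t ht, hT t' ht'] at hstep
      have hg' : ‖g (f t) - g (f t')‖ ≤ ‖f t - f t'‖ :=
        (hg.2 _ _ (hf1 t ht) (hf1 t' ht')).trans
          (mul_le_of_le_one_left (norm_nonneg _) F.inv_q_lt_one.le)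
      rw [le_inv_mul_iff₀ F.q_pos]
      refine mul_le_of_mul_le_max_left F.one_lt_q_real (norm_nonneg _) ?_
      rw [max_comm]
      exact hstep.trans (max_le_max_left _ hg')
    · cases k with
      | zero => simpa using (hf t ht).1
      | succ k =>
        rw [Function.iterate_succ_apply, hT t ht]
        exact hgN (f t) (hf1 t ht) k (by omega)

theorem exists_follows (ha : ‖a‖ ≤ 1) (hb : ‖b‖ = F.q) (hs : ∀ k, s k ∈ F.reps) {t : K}
    (ht : ‖t‖ ≤ 1) : ∃ x, F.Follows a b s (x, t) := by
  have := F.complete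
  choose g _ hg using fun N => exists_isLip_followsUpTo ha hb N s hs
  have hcauchy : CauchySeq fun N => g N t := by
    refine cauchySeq_of_le_geometric (F.q : ℝ)⁻¹ (F.q : ℝ)⁻¹ F.inv_q_lt_one fun N => ?_
    have h := mul_norm_sub_fst_le_of_followsUpTo ha hb hs (hg N t ht)
      ((hg (N + 1) t ht).mono N.le_succ)
    simp only [sub_self, norm_zero, max_eq_right (by positivity : (0 : ℝ) ≤ (F.q : ℝ)⁻¹ ^ N)] at h
    rwa [dist_eq_norm, le_inv_mul_iff₀ F.q_pos]
  obtain ⟨x, hx⟩ := cauchySeq_tendsto_of_complete hcauchy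
  refine ⟨x, fun k => ?_⟩
  have hcont : Continuous fun y => ‖((F.Tmap a b)^[k] (y, t)).1 - s k‖ := by
    have := (F.continuous_Tmap a b).iterate k
    fun_prop
  exact le_of_tendsto ((hcont.tendsto x).comp hx)
    (Filter.eventually_atTop.2 ⟨k, fun N hN => hg N t ht k hN⟩)

-- `Classical.epsilon` picks the unique point of the line `y = t` following `s`; junk otherwise.
variable (F a b) in
def vcurve (s : ℕ → K) (t : K) : K :=
  Classical.epsilon fun x => F.Follows a b s (x, t)

theorem follows_vcurve (ha : ‖a‖ ≤ 1) (hb : ‖b‖ = F.q) (hs : ∀ k, s k ∈ F.reps) {t : K}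
    (ht : ‖t‖ ≤ 1) : F.Follows a b s (F.vcurve a b s t, t) :=
  Classical.epsilon_spec (exists_follows ha hb hs ht)

theorem eq_vcurve_of_follows (ha : ‖a‖ ≤ 1) (hb : ‖b‖ = F.q) (hs : ∀ k, s k ∈ F.reps)
    {p : K × K} (hp₂ : ‖p.2‖ ≤ 1) (hp : F.Follows a b s p) : p.1 = F.vcurve a b s p.2 := by
  have h := mul_norm_sub_fst_le_of_follows ha hb hs hp (follows_vcurve ha hb hs hp₂)
  rw [sub_self, norm_zero] at h
  exact sub_eq_zero.1 (norm_le_zero_iff.1 (nonpos_of_mul_nonpos_right h F.q_pos))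

theorem isLip_vcurve (ha : ‖a‖ ≤ 1) (hb : ‖b‖ = F.q) (hs : ∀ k, s k ∈ F.reps) :
    F.IsLip (F.vcurve a b s) := by
  refine ⟨fun t ht => norm_le_one_of_near_rep (hs 0) (by simpa using follows_vcurve ha hb hs ht 0),
    fun t t' ht ht' => ?_⟩
  rw [le_inv_mul_iff₀ F.q_pos]
  exact mul_norm_sub_fst_le_of_follows ha hb hs (follows_vcurve ha hb hs ht)
    (follows_vcurve ha hb hs ht')

theorem exists_follows_of_mem (ha : ‖a‖ ≤ 1) (hb : ‖b‖ = F.q) {p : K × K}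
    (hp : p ∈ unitPoly K) : ∃ s : ℕ → K, (∀ k, s k ∈ F.reps) ∧ F.Follows a b s p := by
  choose s hs hfollow using fun k => F.reps_cover _ ((mapsTo_Tmap ha hb).iterate k hp).1
  exact ⟨s, hs, hfollow⟩

end NAField

theorem stmt12_general (F : NAField K) (a b : K) (ha : ‖a‖ < 1)
    (hb : ‖b‖ = (F.q : ℝ)) :
    ∃ fseq : (ℕ → K) → K → K,
      (∀ s : ℕ → K, (∀ k, s k ∈ F.reps) →
        F.IsLip (fseq s) ∧
        {p : K × K | ‖p.2‖ ≤ 1 ∧ p.1 = fseq s p.2} =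
          {p : K × K | ‖p.1‖ ≤ 1 ∧ ‖p.2‖ ≤ 1 ∧
            ∀ k : ℕ, ‖((F.Tmap a b)^[k] p).1 - s k‖ ≤ ((F.q : ℝ))⁻¹}) ∧
      ∀ p : K × K, ‖p.1‖ ≤ 1 → ‖p.2‖ ≤ 1 →
        ∃ s : ℕ → K, (∀ k, s k ∈ F.reps) ∧ p.1 = fseq s p.2 := by
  refine ⟨F.vcurve a b, fun s hs => ⟨F.isLip_vcurve ha.le hb hs, ?_⟩, fun p h₁ h₂ => ?_⟩
  · ext ⟨x, t⟩
    constructor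
    · rintro ⟨ht : ‖t‖ ≤ 1, rfl : x = F.vcurve a b s t⟩
      exact ⟨(F.isLip_vcurve ha.le hb hs).1 t ht, ht, F.follows_vcurve ha.le hb hs ht⟩
    · rintro ⟨-, ht, hfollow⟩
      exact ⟨ht, F.eq_vcurve_of_follows ha.le hb hs ht hfollow⟩
  · obtain ⟨s, hs, hfollow⟩ := F.exists_follows_of_mem ha.le hb ⟨h₁, h₂⟩
    exact ⟨s, hs, F.eq_vcurve_of_follows ha.le hb hs h₂ hfollow⟩

theorem stmt12 (F : NAField K) (a b : K) (ha0 : a ≠ 0) (ha : ‖a‖ < 1)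
    (hb : ‖b‖ = (F.q : ℝ)) :
    ∃ fseq : (ℕ → K) → K → K,
      (∀ s : ℕ → K, (∀ k, s k ∈ F.reps) →
        F.IsLip (fseq s) ∧
        {p : K × K | ‖p.2‖ ≤ 1 ∧ p.1 = fseq s p.2} =
          {p : K × K | ‖p.1‖ ≤ 1 ∧ ‖p.2‖ ≤ 1 ∧
            ∀ k : ℕ, ‖((F.Tmap a b)^[k] p).1 - s k‖ ≤ ((F.q : ℝ))⁻¹}) ∧
      ∀ p : K × K, ‖p.1‖ ≤ 1 → ‖p.2‖ ≤ 1 →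
        ∃ s : ℕ → K, (∀ k, s k ∈ F.reps) ∧ p.1 = fseq s p.2 :=
  stmt12_general F a b ha hb
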